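/- Let 𝓔 be a collection of admissible subsets of ℝ^d, let s, σ ∈ (0,1/2), and let τ ∈ (0,1) satisfy 0 < σ < τ/(1+2τ). Suppose that for every Q ∈ 𝓔 and every measurable function f : Q → ℝ which assumes only the three values 0, 1 and 2, one has J(f^*, I', σ) ≤ sup_{E ∈ 𝓔(Q)} J(f, E, s) for every bounded closed subinterval I' of positive length contained in (0, λ(Q)), where f^* is the non-increasing rearrangement of f and 𝓔(Q) is the collection of sets of 𝓔 contained in Q. Then (τ,s) is a John–Strömberg pair for 𝓔. -/

import Mathlib

open MeasureTheory Set

/-- The John–Strömberg functional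
`J(f,E,s) = inf_{c ∈ ℝ} inf {α ≥ 0 : μ({x ∈ E : |f(x) − c| > α}) < s·μ(E)}`. -/
noncomputable def JS {X : Type*} [MeasurableSpace X] (μ : Measure X)
    (f : X → ℝ) (E : Set X) (s : ℝ) : ℝ :=
  sInf {α : ℝ | 0 ≤ α ∧ ∃ c : ℝ, μ {x ∈ E | α < |f x - c|} < ENNReal.ofReal s * μ E}

/-- An admissible set: measurable with positive finite measure. -/
def Admissible {X : Type*} [MeasurableSpace X] (μ : Measure X) (E : Set X) : Prop :=
  MeasurableSet E ∧ 0 < μ E ∧ μ E < ⊤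

/-- `(τ,s)` is a John–Strömberg pair for the collection `𝓔`. -/
def IsJSPair {X : Type*} [MeasurableSpace X] (μ : Measure X)
    (𝓔 : Set (Set X)) (τ s : ℝ) : Prop :=
  0 < τ ∧ 0 < s ∧
  ∀ Q ∈ 𝓔, ∀ Ep Em G : Set X,
    MeasurableSet Ep → MeasurableSet Em → MeasurableSet G →
    Disjoint Ep Em → Disjoint Ep G → Disjoint Em G →
    Q = Ep ∪ Em ∪ G →
    ENNReal.ofReal τ * μ G < min (μ Ep) (μ Em) →
    ∃ W ∈ 𝓔, W ⊆ Q ∧ ENNReal.ofReal s * μ W ≤ min (μ (W ∩ Ep)) (μ (W ∩ Em))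

/-- The non-increasing rearrangement `g^*(t) = inf {α > 0 : μ({x : g x > α}) ≤ t}`. -/
noncomputable def rearr {X : Type*} [MeasurableSpace X] (μ : Measure X)
    (g : X → ℝ) (t : ℝ) : ℝ :=
  sInf {α : ℝ | 0 < α ∧ μ {x | α < g x} ≤ ENNReal.ofReal t}

/-!
Take `f = 2` on `E₊`, `1` on `G` and `0` on `E₋`. Its rearrangement is `2` on `(0, |E₊|)`, `1` on
the next interval of length `|G|` and `0` after that. Widening that middle interval by `δ` on both
sides, with `τ|G| ≤ δ < min(|E₊|, |E₋|)`, gives an interval `I'` on which the values `2` and `0`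
each occupy a proportion `δ / (|G| + 2δ) ≥ σ` (this is where `σ < τ / (1 + 2τ)` enters), so
`J(f^*, I', σ) ≥ 1`. By hypothesis some `W ∈ 𝓔(Q)` then has `J(f, W, s) > 1/2`; testing the
constants `c = 1/2` and `c = 3/2` shows that `W ∩ E₊` and `W ∩ E₋` each carry a proportion at
least `s` of `W`.
-/

open ENNReal

section JohnStromberg

variable {X : Type*} [MeasurableSpace X] {μ : Measure X} {f : X → ℝ} {E A B : Set X} {s : ℝ}

theorem measure_le_of_lt_JS {α : ℝ} (hα : 0 ≤ α) (h : α < JS μ f E s) (c : ℝ) :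
    ENNReal.ofReal s * μ E ≤ μ {x ∈ E | α < |f x - c|} := by
  by_contra! hc
  exact h.not_ge (csInf_le ⟨0, fun _ h => h.1⟩ ⟨hα, c, hc⟩)

theorem half_sub_le_JS {u v : ℝ} (hs : 0 < s) (hE : 0 < μ E) (hf : ∀ x ∈ E, f x ∈ Icc u v)
    (hA : A ⊆ E) (hB : B ⊆ E) (hfA : ∀ x ∈ A, f x = u) (hfB : ∀ x ∈ B, f x = v)
    (hμA : ENNReal.ofReal s * μ E ≤ μ A) (hμB : ENNReal.ofReal s * μ E ≤ μ B) :
    (v - u) / 2 ≤ JS μ f E s := by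
  have hbounded : {x ∈ E | |v - u| < |f x - u|} = ∅ := by
    refine eq_empty_of_forall_notMem fun x ⟨hx, hlt⟩ => hlt.not_ge ?_
    have := hf x hx
    rw [abs_of_nonneg (by linarith [this.1])]
    exact (sub_le_sub_right this.2 u).trans (le_abs_self _)
  refine le_csInf ⟨|v - u|, abs_nonneg _, u, ?_⟩ fun α ⟨_, c, hc⟩ => ?_
  · rw [hbounded, measure_empty]
    exact ENNReal.mul_pos (ENNReal.ofReal_pos.2 hs).ne' hE.ne'
  by_contra! hα
  have hsub : ∀ {T : Set X} {w : ℝ}, T ⊆ E → (∀ x ∈ T, f x = w) → α < |w - c| →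
      T ⊆ {x ∈ E | α < |f x - c|} := fun hT hfT hw x hx => ⟨hT hx, hfT x hx ▸ hw⟩
  rcases lt_or_ge α |u - c| with hu | hu
  · exact (hc.trans_le (hμA.trans (measure_mono (hsub hA hfA hu)))).false
  · have hv : α < |v - c| := by linarith [abs_sub_le v c u, abs_sub_comm u c, le_abs_self (v - u)]
    exact (hc.trans_le (hμB.trans (measure_mono (hsub hB hfB hv)))).false

theorem one_le_JS_Icc {φ : ℝ → ℝ} {σ a p q b : ℝ} (hσ : 0 < σ) (hab : a < b) (hpq : p ≤ q)
    (hφ : ∀ t, φ t ∈ Icc 0 2) (hφ2 : ∀ t ∈ Ico a p, φ t = 2) (hφ0 : ∀ t ∈ Icc q b, φ t = 0)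
    (hσp : σ * (b - a) ≤ p - a) (hσq : σ * (b - a) ≤ b - q) :
    1 ≤ JS volume φ (Icc a b) σ := by
  have hσab : 0 < σ * (b - a) := mul_pos hσ (sub_pos.2 hab)
  have hvol : ∀ {r}, σ * (b - a) ≤ r → ENNReal.ofReal σ * volume (Icc a b) ≤ ENNReal.ofReal r :=
    fun h => by rw [Real.volume_Icc, ← ENNReal.ofReal_mul hσ.le]; exact ENNReal.ofReal_le_ofReal h
  have h := half_sub_le_JS (μ := volume) (A := Icc q b) (B := Ico a p) hσ (by simpa using hab)
    (fun t _ => hφ t) (Icc_subset_Icc (by linarith) le_rfl)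
    (Ico_subset_Icc_self.trans (Icc_subset_Icc le_rfl (by linarith))) hφ0 hφ2 (by simpa using hvol hσq) (by simpa using hvol hσp)
  norm_num at h
  exact h

end JohnStromberg

section Rearrangement

variable {X : Type*} [MeasurableSpace X] {μ : Measure X} {g : X → ℝ} {t v : ℝ}

theorem rearr_nonneg : 0 ≤ rearr μ g t :=
  Real.sInf_nonneg fun _ h => h.1.le

theorem rearr_le (hv : 0 < v) (hg : ∀ x, g x ≤ v) : rearr μ g t ≤ v :=
  csInf_le ⟨0, fun _ h => h.1.le⟩ ⟨hv, by simp [fun x => (hg x).not_gt]⟩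

theorem rearr_eq_of_lt_measure {A : Set X} (hv : 0 < v) (hg : ∀ x, g x ≤ v)
    (hgA : ∀ x ∈ A, g x = v) (ht : ENNReal.ofReal t < μ A) : rearr μ g t = v := by
  refine le_antisymm (rearr_le hv hg) (le_csInf ⟨v, hv, by simp [fun x => (hg x).not_gt]⟩ ?_)
  rintro α ⟨-, hα⟩
  by_contra! h
  exact ht.not_ge ((measure_mono fun x hx => show α < g x from hgA x hx ▸ h).trans hα)

theorem rearr_eq_zero {S : Set X} (hgS : ∀ x ∉ S, g x ≤ 0) (ht : μ S ≤ ENNReal.ofReal t) :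
    rearr μ g t = 0 := by
  have : {α : ℝ | 0 < α ∧ μ {x | α < g x} ≤ ENNReal.ofReal t} = Ioi 0 := by
    refine Set.ext fun α => ⟨And.left, fun hα => ⟨hα, (measure_mono fun x hx => ?_).trans ht⟩⟩
    by_contra hxS
    exact (hgS x hxS).not_gt (hα.trans hx)
  rw [rearr, this, csInf_Ioi]

end Rearrangement

theorem Real.exists_lt_of_lt_iSup {ι : Sort*} {F : ι → ℝ} {a : ℝ} (ha : 0 ≤ a)
    (h : a < ⨆ i, F i) : ∃ i, a < F i := by
  cases isEmpty_or_nonempty ι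
  · rw [Real.iSup_of_isEmpty] at h
    exact absurd ha h.not_ge
  · exact exists_lt_of_lt_ciSup h

theorem ENNReal.mul_toReal_lt_toReal_of_ofReal_mul_lt {τ : ℝ} {x y : ℝ≥0∞} (hτ : 0 ≤ τ)
    (hy : y ≠ ⊤) (h : ENNReal.ofReal τ * x < y) : τ * x.toReal < y.toReal := by
  simpa [ENNReal.toReal_mul, ENNReal.toReal_ofReal hτ] using
    (ENNReal.toReal_lt_toReal h.ne_top hy).2 h

section Staircase

variable {X : Type*} {A B : Set X} {x : X}

noncomputable def staircase (A B : Set X) : X → ℝ :=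
  A.indicator 1 + (A ∪ B).indicator 1

theorem staircase_eq_two_iff : staircase A B x = 2 ↔ x ∈ A := by
  by_cases hA : x ∈ A <;> by_cases hB : x ∈ B <;> norm_num [staircase, hA, hB]

theorem staircase_eq_zero_iff : staircase A B x = 0 ↔ x ∉ A ∪ B := by
  by_cases hA : x ∈ A <;> by_cases hB : x ∈ B <;> norm_num [staircase, hA, hB]

theorem staircase_eq_zero_or_one_or_two :
    staircase A B x = 0 ∨ staircase A B x = 1 ∨ staircase A B x = 2 := by
  by_cases hA : x ∈ A <;> by_cases hB : x ∈ B <;> norm_num [staircase, hA, hB]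

theorem staircase_le_two : staircase A B x ≤ 2 := by
  rcases staircase_eq_zero_or_one_or_two (A := A) (B := B) (x := x) with h | h | h <;>
    rw [h] <;> norm_num

theorem indicator_staircase {Q : Set X} (h : A ∪ B ⊆ Q) :
    Q.indicator (staircase A B) = staircase A B :=
  indicator_eq_self.2 fun _ hx => h (not_not.1 (mt staircase_eq_zero_iff.2 hx))

theorem measurable_staircase [MeasurableSpace X] (hA : MeasurableSet A) (hB : MeasurableSet B) :
    Measurable (staircase A B) :=
  (measurable_const.indicator hA).add (measurable_const.indicator (hA.union hB))

theorem mem_of_half_lt_abs_staircase_sub (h : 1 / 2 < |staircase A B x - 1 / 2|) : x ∈ A := by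
  rcases staircase_eq_zero_or_one_or_two (A := A) (B := B) (x := x) with h' | h' | h' <;>
    rw [h'] at h <;> norm_num [abs_of_nonneg, abs_of_nonpos] at h
  exact staircase_eq_two_iff.1 h'

theorem notMem_union_of_half_lt_abs_staircase_sub (h : 1 / 2 < |staircase A B x - 3 / 2|) :
    x ∉ A ∪ B := by
  rcases staircase_eq_zero_or_one_or_two (A := A) (B := B) (x := x) with h' | h' | h' <;>
    rw [h'] at h <;> norm_num [abs_of_nonneg, abs_of_nonpos] at h
  exact staircase_eq_zero_iff.1 h'

end Staircase

section Witness

variable {X : Type*} [MeasurableSpace X] {μ : Measure X}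

theorem exists_Icc_one_le_JS_rearr {g : X → ℝ} {A S : Set X} {σ τ p q r : ℝ}
    (hσ : 0 < σ) (hτ : 0 < τ) (hστ : σ < τ / (1 + 2 * τ))
    (hg : ∀ x, g x ≤ 2) (hgA : ∀ x ∈ A, g x = 2) (hgS : ∀ x ∉ S, g x ≤ 0)
    (hA : μ A = ENNReal.ofReal p) (hS : μ S ≤ ENNReal.ofReal (p + q))
    (hq : 0 ≤ q) (hp : τ * q < p) (hr : τ * q < r) :
    ∃ a b, 0 < a ∧ a < b ∧ b < p + q + r ∧ 1 ≤ JS volume (rearr μ g) (Icc a b) σ := by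
  have hτq : 0 ≤ τ * q := mul_nonneg hτ.le hq
  obtain ⟨δ, hτδ, hδ⟩ := exists_between (lt_min hp hr)
  obtain ⟨hδp, hδr⟩ := lt_min_iff.1 hδ
  have hσδ : σ * (q + 2 * δ) ≤ δ := by
    have hστ' := (lt_div_iff₀ (by positivity)).1 hστ
    nlinarith [mul_le_mul_of_nonneg_left hτδ.le (by nlinarith : (0 : ℝ) ≤ 1 - 2 * σ),
      mul_nonneg hq (by nlinarith : (0 : ℝ) ≤ τ - 2 * σ * τ - σ)]
  refine ⟨p - δ, p + q + δ, by linarith, by linarith, by linarith, one_le_JS_Icc (p := p)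
    (q := p + q) hσ (by linarith) (by linarith) (fun _ => ⟨rearr_nonneg, rearr_le two_pos hg⟩)
    (fun t ht => rearr_eq_of_lt_measure two_pos hg hgA ?_)
    (fun _ ht => rearr_eq_zero hgS (hS.trans (ENNReal.ofReal_le_ofReal ht.1)))
    (by linarith) (by linarith)⟩
  rw [hA]
  exact (ENNReal.ofReal_lt_ofReal_iff (by linarith)).2 ht.2

theorem le_min_measure_inter_of_half_lt_JS {A B C W : Set X} {s : ℝ} (hW : W ⊆ A ∪ B ∪ C)
    (h : 1 / 2 < JS μ (staircase A C) W s) :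
    ENNReal.ofReal s * μ W ≤ min (μ (W ∩ A)) (μ (W ∩ B)) := by
  refine le_min ((measure_le_of_lt_JS (by norm_num) h (1 / 2)).trans (measure_mono ?_))
    ((measure_le_of_lt_JS (by norm_num) h (3 / 2)).trans (measure_mono ?_))
  · exact fun x ⟨hxW, hx⟩ => ⟨hxW, mem_of_half_lt_abs_staircase_sub hx⟩
  · rintro x ⟨hxW, hx⟩
    have hxAC := notMem_union_of_half_lt_abs_staircase_sub hx
    rcases hW hxW with (hxA | hxB) | hxC
    exacts [absurd (Or.inl hxA) hxAC, ⟨hxW, hxB⟩, absurd (Or.inr hxC) hxAC]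

theorem exists_Icc_one_le_JS_rearr_staircase {A B C : Set X} {σ τ : ℝ}
    (hσ : 0 < σ) (hτ : 0 < τ) (hστ : σ < τ / (1 + 2 * τ))
    (hB : MeasurableSet B) (hC : MeasurableSet C)
    (hAB : Disjoint A B) (hAC : Disjoint A C) (hBC : Disjoint B C) (hfin : μ (A ∪ B ∪ C) ≠ ⊤)
    (hmin : ENNReal.ofReal τ * μ C < min (μ A) (μ B)) :
    ∃ a b, 0 < a ∧ a < b ∧ b < μ.real (A ∪ B ∪ C) ∧
      1 ≤ JS volume (rearr μ (staircase A C)) (Icc a b) σ := by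
  have hAfin : μ A ≠ ⊤ := measure_ne_top_of_subset (subset_union_left.trans subset_union_left) hfin
  have hBfin : μ B ≠ ⊤ := measure_ne_top_of_subset (subset_union_right.trans subset_union_left) hfin
  have hCfin : μ C ≠ ⊤ := measure_ne_top_of_subset subset_union_right hfin
  obtain ⟨a, b, ha, hab, hb, hJ⟩ := exists_Icc_one_le_JS_rearr (S := A ∪ C) (p := μ.real A)
    (q := μ.real C) (r := μ.real B) hσ hτ hστ (fun _ => staircase_le_two)
    (fun _ hx => staircase_eq_two_iff.2 hx)
    (fun _ hx => (staircase_eq_zero_iff.2 hx).le) (ofReal_measureReal hAfin).symm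
    ((measure_union_le _ _).trans_eq (by rw [ofReal_add measureReal_nonneg measureReal_nonneg,
      ofReal_measureReal hAfin, ofReal_measureReal hCfin])) measureReal_nonneg
    (mul_toReal_lt_toReal_of_ofReal_mul_lt hτ.le hAfin (hmin.trans_le (min_le_left _ _)))
    (mul_toReal_lt_toReal_of_ofReal_mul_lt hτ.le hBfin (hmin.trans_le (min_le_right _ _)))
  refine ⟨a, b, ha, hab, hb.trans_eq ?_, hJ⟩
  rw [measureReal_union (hAC.union_left hBC) hC (measure_union_ne_top hAfin hBfin) hCfin,
    measureReal_union hAB hB hAfin hBfin]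
  ring

end Witness

theorem stmt6 {d : ℕ} (𝓔 : Set (Set (Fin d → ℝ)))
    (h𝓔 : ∀ E ∈ 𝓔, Admissible volume E)
    (s σ : ℝ) (hs : s ∈ Set.Ioo (0:ℝ) (1/2)) (hσ : σ ∈ Set.Ioo (0:ℝ) (1/2))
    (τ : ℝ) (hτ : τ ∈ Set.Ioo (0:ℝ) 1) (hστ : σ < τ / (1 + 2 * τ))
    (hyp : ∀ Q ∈ 𝓔, ∀ f : (Fin d → ℝ) → ℝ, Measurable f →
      (∀ x ∈ Q, f x = 0 ∨ f x = 1 ∨ f x = 2) →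
      ∀ a b : ℝ, 0 < a → a < b → b < (volume Q).toReal →
        JS volume (rearr volume (Q.indicator f)) (Set.Icc a b) σ ≤
          ⨆ E : {E : Set (Fin d → ℝ) // E ∈ 𝓔 ∧ E ⊆ Q}, JS volume f E.1 s) :
    IsJSPair volume 𝓔 τ s := by
  refine ⟨hτ.1, hs.1, fun Q hQ Ep Em G hEp hEm hG hpm hpg hmg hQeq hmin => ?_⟩
  have hf : Q.indicator (staircase Ep G) = staircase Ep G :=
    indicator_staircase (hQeq ▸ union_subset (subset_union_left.trans subset_union_left)
      subset_union_right)
  obtain ⟨a, b, ha, hab, hb, hJ⟩ := exists_Icc_one_le_JS_rearr_staircase hσ.1 hτ.1 hστ hEm hG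
    hpm hpg hmg (hQeq ▸ (h𝓔 Q hQ).2.2.ne) hmin
  have hsup := hJ.trans (hf ▸ hyp Q hQ _ (measurable_staircase hEp hG)
    (fun _ _ => staircase_eq_zero_or_one_or_two) a b ha hab (hQeq ▸ hb))
  obtain ⟨⟨W, hW𝓔, hWQ⟩, hW⟩ :=
    Real.exists_lt_of_lt_iSup (by norm_num) (one_half_lt_one.trans_le hsup)
  exact ⟨W, hW𝓔, hWQ, le_min_measure_inter_of_half_lt_JS (hQeq ▸ hWQ) hW⟩
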